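/- arXiv:2001.01239 — 4 statements merged into one kernel-verified Lean document; each statement's English description precedes it below -/
import Mathlib

section
/- Let 0 < ε < R and let u ∈ C²((ε,R)) ∩ C¹([ε,R]) satisfy u''(s) + ((N−1)/s)u'(s) + f(u(s)) = 0 for all s ∈ (ε,R) and u(s) > 0 for s ∈ (ε,R). Then 0 = (N/2 − 1 − N/(p+1)) ∫_ε^R s^{N−1} u'(s)² ds + (N/2 − N/(p+1)) ∫_ε^R s^{N−1} u(s)² ds + (N/(p+1)) (R^{N−1} u(R) u'(R) − ε^{N−1} u(ε) u'(ε)) + (1/2)(R^N u'(R)² − ε^N u'(ε)²) − (1/2)(R^N u(R)² − ε^N u(ε)²) + (1/(p+1))(R^N u(R)^{p+1} − ε^N u(ε)^{p+1}). -/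
/-!
For `F' = f` and any `a`, a solution of `u'' + ((N-1)/s) u' + f(u) = 0` satisfies
`(s^N (u'^2/2 + F(u)) + a s^(N-1) u u')' = s^(N-1) ((1 - N/2 + a) u'^2 + N F(u) - a u f(u))`:
the multiplier `s^N u'` gives the energy term and `s^(N-1) u` the virial term.
For `f(u) = -u + u^p`, `F(u) = -u^2/2 + u^(p+1)/(p+1)` and `a = N/(p+1)` the `u^(p+1)` terms
cancel in `N F(u) - a u f(u) = (a - N/2) u^2`, and integrating over `[ε, R]` gives the identity.
-/

open Real Set Filter Topology MeasureTheory

noncomputable section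

/-- The nonlinearity `f(u) = -u + u^p`. -/
def fNL (p u : ℝ) : ℝ := -u + u ^ p

/-- The Sobolev critical exponent `p_S = (N+2)/(N-2)`. -/
def pSob (N : ℕ) : ℝ := ((N : ℝ) + 2) / ((N : ℝ) - 2)

/-- `θ = 2/(p-1)`. -/
def thetaP (p : ℝ) : ℝ := 2 / (p - 1)

/-- `A = (θ(N-2-θ))^{1/(p-1)}`. -/
def Aconst (N : ℕ) (p : ℝ) : ℝ :=
  (thetaP p * ((N : ℝ) - 2 - thetaP p)) ^ (1 / (p - 1))

/-- `m = (θ(N-2-θ))^{-1/2}`. -/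
def mConst (N : ℕ) (p : ℝ) : ℝ :=
  (thetaP p * ((N : ℝ) - 2 - thetaP p)) ^ (-(1 / 2) : ℝ)

/-- `α = m(N-2-2θ)`. -/
def alphaConst (N : ℕ) (p : ℝ) : ℝ :=
  mConst N p * ((N : ℝ) - 2 - 2 * thetaP p)

/-- The condition `p < p_JL`, where `p_JL = 1 + 4/(N-4-2√(N-1))` for `N ≥ 11` and
`p_JL = ∞` for `N ≤ 10`. -/
def pJLcond (N : ℕ) (p : ℝ) : Prop :=
  11 ≤ N → p < 1 + 4 / ((N : ℝ) - 4 - 2 * Real.sqrt ((N : ℝ) - 1))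

/-- `y` is a C² solution of `y'' + α y' - y + y^p - m² e^{2mt} y = 0` on `(-∞, T]`
with `y → 1` as `t → -∞`; `y'`, `y''` are its first and second derivatives. -/
def IsSingODEOn (N : ℕ) (p T : ℝ) (y y' y'' : ℝ → ℝ) : Prop :=
  (∀ t ∈ Iic T, HasDerivWithinAt y (y' t) (Iic T) t) ∧
  (∀ t ∈ Iic T, HasDerivWithinAt y' (y'' t) (Iic T) t) ∧
  ContinuousOn y'' (Iic T) ∧
  (∀ t ∈ Iic T, y'' t + alphaConst N p * y' t - y t + y t ^ p
      - (mConst N p) ^ 2 * Real.exp (2 * mConst N p * t) * y t = 0) ∧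
  Tendsto y atBot (𝓝 1)

/-- `y` is a C² solution of `y'' + α y' - y + y^p - m² e^{2mt} y = 0` on all of `ℝ`
with `y → 1` as `t → -∞`. -/
def IsEntireSingODE (N : ℕ) (p : ℝ) (y y' y'' : ℝ → ℝ) : Prop :=
  (∀ t : ℝ, HasDerivAt y (y' t) t) ∧
  (∀ t : ℝ, HasDerivAt y' (y'' t) t) ∧
  Continuous y'' ∧
  (∀ t : ℝ, y'' t + alphaConst N p * y' t - y t + y t ^ p
      - (mConst N p) ^ 2 * Real.exp (2 * mConst N p * t) * y t = 0) ∧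
  Tendsto y atBot (𝓝 1)

/-- The singular solution `u*(s) = A s^{-θ} y*(m⁻¹ log s)` built from `y*`. -/
def ustar (N : ℕ) (p : ℝ) (y : ℝ → ℝ) (s : ℝ) : ℝ :=
  Aconst N p * s ^ (-(thetaP p)) * y (Real.log s / mConst N p)

/-- `u` is a C² solution on `[0,∞)` of the IVP `u'' + ((N-1)/s)u' + f(u) = 0`,
`u(0) = γ`, `u'(0) = 0`, with nonlinearity `f(u) = -u + u^p`. -/
def IsIVPSol (N : ℕ) (p γ : ℝ) (u u' u'' : ℝ → ℝ) : Prop :=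
  (∀ s ∈ Ici (0:ℝ), HasDerivWithinAt u (u' s) (Ici 0) s) ∧
  (∀ s ∈ Ici (0:ℝ), HasDerivWithinAt u' (u'' s) (Ici 0) s) ∧
  ContinuousOn u'' (Ici 0) ∧
  u 0 = γ ∧ u' 0 = 0 ∧
  (∀ s > (0:ℝ), u'' s + ((N : ℝ) - 1) / s * u' s + fNL p (u s) = 0)

/-- `u` is a C² solution on `[0,∞)` of the IVP `u'' + ((N-1)/ρ)u' + u^p = 0`,
`u(0) = γ`, `u'(0) = 0`. -/
def IsBarSol (N : ℕ) (p γ : ℝ) (u u' u'' : ℝ → ℝ) : Prop :=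
  (∀ ρ ∈ Ici (0:ℝ), HasDerivWithinAt u (u' ρ) (Ici 0) ρ) ∧
  (∀ ρ ∈ Ici (0:ℝ), HasDerivWithinAt u' (u'' ρ) (Ici 0) ρ) ∧
  ContinuousOn u'' (Ici 0) ∧
  u 0 = γ ∧ u' 0 = 0 ∧
  (∀ ρ > (0:ℝ), u'' ρ + ((N : ℝ) - 1) / ρ * u' ρ + u ρ ^ p = 0)

/-- `s` is the `(k+1)`-th positive critical point of a function whose derivative is `u'`:
`s` is a positive critical point having exactly `k` positive critical points below it. -/
def IsNthCritPt (u' : ℝ → ℝ) (k : ℕ) (s : ℝ) : Prop :=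
  0 < s ∧ u' s = 0 ∧ {x : ℝ | 0 < x ∧ x < s ∧ u' x = 0}.encard = (k : ℕ∞)

/-- `U` is a positive C² radial solution of the Neumann problem
`U'' + ((N-1)/r)U' + λ f(U) = 0` on `(0,1)`, `U'(0) = U'(1) = 0`, `U > 0` on `[0,1]`. -/
def NeumannSol (N : ℕ) (p lam : ℝ) (U U' U'' : ℝ → ℝ) : Prop :=
  (∀ r ∈ Icc (0:ℝ) 1, HasDerivWithinAt U (U' r) (Icc 0 1) r) ∧
  (∀ r ∈ Icc (0:ℝ) 1, HasDerivWithinAt U' (U'' r) (Icc 0 1) r) ∧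
  ContinuousOn U'' (Icc 0 1) ∧
  (∀ r ∈ Ioo (0:ℝ) 1, U'' r + ((N : ℝ) - 1) / r * U' r + lam * fNL p (U r) = 0) ∧
  U' 0 = 0 ∧ U' 1 = 0 ∧ (∀ r ∈ Icc (0:ℝ) 1, 0 < U r)

/-- `(lam, U)` is a singular solution of the Neumann problem whose graph meets `1`
exactly `n` times: `U` is C² on `(0,1)`, continuous on `(0,1]`, `U'(1) = 0`, it solves
`U'' + ((N-1)/r)U' + λ f(U) = 0` on `(0,1)`, satisfies the asymptotics
`U(r) = A(√λ r)^{-θ}(1+o(1))` as `r ↓ 0` (i.e. `r^θ U(r) → A λ^{-θ/2}`),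
`U - 1` has exactly `n` zeros in `(0,1]`, and `U > 0` on `(0,1]`. -/
def SingBVPSol (N : ℕ) (p lam : ℝ) (n : ℕ) (U U' U'' : ℝ → ℝ) : Prop :=
  (∀ r ∈ Ioc (0:ℝ) 1, HasDerivWithinAt U (U' r) (Ioc 0 1) r) ∧
  (∀ r ∈ Ioo (0:ℝ) 1, HasDerivAt U' (U'' r) r) ∧
  ContinuousOn U (Ioc 0 1) ∧
  ContinuousOn U'' (Ioo 0 1) ∧
  (∀ r ∈ Ioo (0:ℝ) 1, U'' r + ((N : ℝ) - 1) / r * U' r + lam * fNL p (U r) = 0) ∧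
  U' 1 = 0 ∧
  Tendsto (fun r => r ^ thetaP p * U r) (𝓝[>] (0:ℝ))
    (𝓝 (Aconst N p * lam ^ (-(thetaP p) / 2))) ∧
  {r ∈ Ioc (0:ℝ) 1 | U r = 1}.encard = (n : ℕ∞) ∧
  (∀ r ∈ Ioc (0:ℝ) 1, 0 < U r)

section RadialPohozaev

variable {N : ℕ} {f F u u' : ℝ → ℝ}

theorem hasDerivAt_radial_energy (hN : 1 ≤ N) {s u''s : ℝ} (hs : s ≠ 0)
    (hu : HasDerivAt u (u' s) s) (hu' : HasDerivAt u' u''s s)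
    (hF : HasDerivAt F (f (u s)) (u s))
    (hode : u''s + ((N : ℝ) - 1) / s * u' s + f (u s) = 0) :
    HasDerivAt (fun t => t ^ N * (u' t ^ 2 / 2 + F (u t)))
      (s ^ (N - 1) * ((1 - (N : ℝ) / 2) * u' s ^ 2 + N * F (u s))) s := by
  obtain ⟨n, rfl⟩ : ∃ n, N = n + 1 := ⟨N - 1, by omega⟩
  refine ((hasDerivAt_pow (n + 1) s).mul
    (((hu'.pow 2).div_const 2).add (hF.comp s hu))).congr_deriv ?_
  have hu'' : u''s = -(n / s * u' s + f (u s)) := by push_cast at hode; linear_combination hode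
  simp only [hu'', Pi.add_apply, Pi.pow_apply, Function.comp_apply]
  field_simp
  push_cast
  ring

theorem hasDerivAt_radial_virial (hN : 1 ≤ N) {s u''s : ℝ} (hs : s ≠ 0)
    (hu : HasDerivAt u (u' s) s) (hu' : HasDerivAt u' u''s s)
    (hode : u''s + ((N : ℝ) - 1) / s * u' s + f (u s) = 0) :
    HasDerivAt (fun t => t ^ (N - 1) * (u t * u' t))
      (s ^ (N - 1) * (u' s ^ 2 - u s * f (u s))) s := by
  obtain ⟨n, rfl⟩ : ∃ n, N = n + 1 := ⟨N - 1, by omega⟩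
  refine ((hasDerivAt_pow n s).mul (hu.mul hu')).congr_deriv ?_
  have hu'' : u''s = -(n / s * u' s + f (u s)) := by push_cast at hode; linear_combination hode
  simp only [hu'', Pi.mul_apply]
  rcases n with _ | n
  · simp only [pow_zero, CharP.cast_eq_zero]
    ring
  · field_simp
    push_cast
    ring

def pohozaevFlux (N : ℕ) (a : ℝ) (F u u' : ℝ → ℝ) (s : ℝ) : ℝ :=
  s ^ N * (u' s ^ 2 / 2 + F (u s)) + a * (s ^ (N - 1) * (u s * u' s))

theorem integral_radial_pohozaev {ε R : ℝ} {u'' : ℝ → ℝ} (a : ℝ) (hN : 1 ≤ N)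
    (hε : 0 < ε) (hεR : ε ≤ R)
    (hu : ∀ s ∈ Icc ε R, HasDerivWithinAt u (u' s) (Icc ε R) s)
    (hu'cont : ContinuousOn u' (Icc ε R)) (hu' : ∀ s ∈ Ioo ε R, HasDerivAt u' (u'' s) s)
    (hF : ∀ x, HasDerivAt F (f x) x) (hf : Continuous f)
    (hode : ∀ s ∈ Ioo ε R, u'' s + ((N : ℝ) - 1) / s * u' s + f (u s) = 0) :
    ∫ s in ε..R, s ^ (N - 1) *
        ((1 - (N : ℝ) / 2 + a) * u' s ^ 2 + N * F (u s) - a * (u s * f (u s)))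
      = pohozaevFlux N a F u u' R - pohozaevFlux N a F u u' ε := by
  have hucont : ContinuousOn u (Icc ε R) := fun s hs => (hu s hs).continuousWithinAt
  have hFcont : Continuous F := continuous_iff_continuousAt.2 fun x => (hF x).continuousAt
  refine intervalIntegral.integral_eq_sub_of_hasDeriv_right_of_le hεR ?_ (fun s hs => ?_) ?_
  · unfold pohozaevFlux
    fun_prop
  · have hs0 : s ≠ 0 := (hε.trans hs.1).ne'
    have hus : HasDerivAt u (u' s) s :=
      (hu s (Ioo_subset_Icc_self hs)).hasDerivAt (Icc_mem_nhds hs.1 hs.2)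
    refine HasDerivAt.hasDerivWithinAt ?_
    refine ((hasDerivAt_radial_energy hN hs0 hus (hu' s hs) (hF _) (hode s hs)).add
      ((hasDerivAt_radial_virial hN hs0 hus (hu' s hs) (hode s hs)).const_mul a)).congr_deriv ?_
    ring
  · refine ContinuousOn.intervalIntegrable ?_
    rw [uIcc_of_le hεR]
    fun_prop

end RadialPohozaev

theorem Real.rpow_add_one_of_add_ne_zero {y : ℝ} (hy : y + 1 ≠ 0) (x : ℝ) :
    x ^ (y + 1) = x ^ y * x := by
  rcases eq_or_ne x 0 with rfl | hx
  · simp [Real.zero_rpow hy]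
  · exact Real.rpow_add_one hx y

def fNLPrimitive (p u : ℝ) : ℝ := -u ^ 2 / 2 + u ^ (p + 1) / (p + 1)

theorem hasDerivAt_fNLPrimitive {p : ℝ} (hp : 0 ≤ p) (x : ℝ) :
    HasDerivAt (fNLPrimitive p) (fNL p x) x := by
  have hpow := Real.hasDerivAt_rpow_const (x := x) (p := p + 1) (Or.inr (by linarith))
  refine (((hasDerivAt_pow 2 x).neg.div_const 2).add (hpow.div_const (p + 1))).congr_deriv ?_
  rw [add_sub_cancel_right, fNL]
  field_simp
  ring

theorem continuous_fNL {p : ℝ} (hp : 0 ≤ p) : Continuous (fNL p) :=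
  continuous_neg.add (Real.continuous_rpow_const hp)

theorem mul_fNLPrimitive_sub_mul_fNL {p : ℝ} (hp : p + 1 ≠ 0) (c x : ℝ) :
    c * fNLPrimitive p x - c / (p + 1) * (x * fNL p x) = (c / (p + 1) - c / 2) * x ^ 2 := by
  rw [fNLPrimitive, fNL, Real.rpow_add_one_of_add_ne_zero hp]
  field_simp
  ring

theorem pohozaev_identity_general (N : ℕ) (hN : 3 ≤ N) (p : ℝ) (hp : 1 < p)
    (ε R : ℝ) (hε : 0 < ε) (hεR : ε < R)
    (u u' u'' : ℝ → ℝ)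
    (hu : ∀ s ∈ Icc ε R, HasDerivWithinAt u (u' s) (Icc ε R) s)
    (hu'cont : ContinuousOn u' (Icc ε R))
    (hu' : ∀ s ∈ Ioo ε R, HasDerivAt u' (u'' s) s)
    (hode : ∀ s ∈ Ioo ε R, u'' s + ((N : ℝ) - 1) / s * u' s + fNL p (u s) = 0) :
    0 = ((N : ℝ) / 2 - 1 - (N : ℝ) / (p + 1)) * (∫ s in ε..R, s ^ (N - 1) * (u' s) ^ 2)
      + ((N : ℝ) / 2 - (N : ℝ) / (p + 1)) * (∫ s in ε..R, s ^ (N - 1) * (u s) ^ 2)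
      + (N : ℝ) / (p + 1) * (R ^ (N - 1) * u R * u' R - ε ^ (N - 1) * u ε * u' ε)
      + (1 / 2) * (R ^ N * (u' R) ^ 2 - ε ^ N * (u' ε) ^ 2)
      - (1 / 2) * (R ^ N * (u R) ^ 2 - ε ^ N * (u ε) ^ 2)
      + (1 / (p + 1)) * (R ^ N * u R ^ (p + 1) - ε ^ N * u ε ^ (p + 1)) := by
  have hp1 : p + 1 ≠ 0 := by linarith
  have hflux := integral_radial_pohozaev ((N : ℝ) / (p + 1)) (by omega) hε hεR.le hu hu'cont hu'
    (hasDerivAt_fNLPrimitive (by linarith)) (continuous_fNL (by linarith)) hode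
  rw [intervalIntegral.integral_congr (g := fun s => (1 - (N : ℝ) / 2 + N / (p + 1)) *
      (s ^ (N - 1) * u' s ^ 2) + (N / (p + 1) - N / 2) * (s ^ (N - 1) * u s ^ 2))
    fun s _ => by dsimp only; rw [add_sub_assoc, mul_fNLPrimitive_sub_mul_fNL hp1]; ring] at hflux
  have hucont : ContinuousOn u (uIcc ε R) :=
    uIcc_of_le hεR.le ▸ fun s hs => (hu s hs).continuousWithinAt
  have hu'cont' : ContinuousOn u' (uIcc ε R) := uIcc_of_le hεR.le ▸ hu'cont
  rw [intervalIntegral.integral_add, intervalIntegral.integral_const_mul,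
    intervalIntegral.integral_const_mul] at hflux
  · unfold pohozaevFlux fNLPrimitive at hflux
    linear_combination hflux
  all_goals exact ContinuousOn.intervalIntegrable (by fun_prop)

/-- Pohozaev identity in integral form. -/
theorem pohozaev_identity (N : ℕ) (hN : 3 ≤ N) (p : ℝ) (hp : 1 < p)
    (ε R : ℝ) (hε : 0 < ε) (hεR : ε < R)
    (u u' u'' : ℝ → ℝ)
    (hu : ∀ s ∈ Icc ε R, HasDerivWithinAt u (u' s) (Icc ε R) s)
    (hu'cont : ContinuousOn u' (Icc ε R))
    (hu' : ∀ s ∈ Ioo ε R, HasDerivAt u' (u'' s) s)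
    (hu''cont : ContinuousOn u'' (Ioo ε R))
    (hode : ∀ s ∈ Ioo ε R, u'' s + ((N : ℝ) - 1) / s * u' s + fNL p (u s) = 0)
    (hpos : ∀ s ∈ Ioo ε R, 0 < u s) :
    0 = ((N : ℝ) / 2 - 1 - (N : ℝ) / (p + 1)) * (∫ s in ε..R, s ^ (N - 1) * (u' s) ^ 2)
      + ((N : ℝ) / 2 - (N : ℝ) / (p + 1)) * (∫ s in ε..R, s ^ (N - 1) * (u s) ^ 2)
      + (N : ℝ) / (p + 1) * (R ^ (N - 1) * u R * u' R - ε ^ (N - 1) * u ε * u' ε)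
      + (1 / 2) * (R ^ N * (u' R) ^ 2 - ε ^ N * (u' ε) ^ 2)
      - (1 / 2) * (R ^ N * (u R) ^ 2 - ε ^ N * (u ε) ^ 2)
      + (1 / (p + 1)) * (R ^ N * u R ^ (p + 1) - ε ^ N * u ε ^ (p + 1)) :=
  pohozaev_identity_general N hN p hp ε R hε hεR u u' u'' hu hu'cont hu' hode
end
end

section
/- Suppose p ≥ p_S. Then there is no function u ∈ C²([0,∞)) such that u''(s) + ((N−1)/s)u'(s) + f(u(s)) = 0 for all s > 0, u'(0) = 0, u(s) → 0 as s → ∞, and u(s) > 0 for all s ≥ 0. -/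
/-!
Pohozaev argument. With `F(u) = -u²/2 + u^(p+1)/(p+1)`, the energy `E = u'²/2 + F(u)` satisfies
`E' = -((N-1)/s) u'²`, and `P(s) = s^N E + (N-2)/2 · s^(N-1) u u'` satisfies
`P' = s^(N-1) (N F(u) - (N-2)/2 · u f(u)) = s^(N-1) (-u² + (N/(p+1) - (N-2)/2) u^(p+1))`,
which is negative since `p ≥ p_S` means `N/(p+1) ≤ (N-2)/2`. As `P(0) = 0`, `P(s) ≤ P(1) < 0`
for `s ≥ 1`. On the other hand `E` is nonincreasing and `E ≥ F(u) → 0`, so `E ≥ 0`; near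
infinity, where `u` is small, this gives `u'² ≥ u²/4`, hence `u' ≤ -u/2` (by Darboux, `u'` has
a sign, and it cannot be positive) and `u = O(e^(-s/2))`, while `u'` stays bounded. So the only
possibly negative term of `P`, `s^(N-1) u u'`, tends to `0`, and `P(1) ≥ 0`.
-/

open Real Set Filter Topology MeasureTheory

noncomputable section

open Asymptotics

def FNL (p v : ℝ) : ℝ := -v ^ 2 / 2 + v ^ (p + 1) / (p + 1)

def radialEnergy (F u u' : ℝ → ℝ) (s : ℝ) : ℝ := u' s ^ 2 / 2 + F (u s)

def pohozaev (N : ℕ) (F u u' : ℝ → ℝ) (s : ℝ) : ℝ :=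
  s ^ N * radialEnergy F u u' s + ((N : ℝ) - 2) / 2 * (s ^ (N - 1) * u s * u' s)

section Nonlinearity

variable {N : ℕ} {p v : ℝ}

theorem hasDerivAt_FNL (hp : p + 1 ≠ 0) (hv : 0 < v) : HasDerivAt (FNL p) (fNL p v) v := by
  have h := (((hasDerivAt_id v).fun_pow 2).fun_neg.div_const 2).fun_add
    ((Real.hasDerivAt_rpow_const (p := p + 1) (Or.inl hv.ne')).div_const (p + 1))
  refine h.congr_deriv ?_
  simp only [fNL, add_sub_cancel_right, id]
  field_simp
  ring

theorem neg_sq_div_two_le_FNL (hp : 0 < p + 1) (hv : 0 ≤ v) : -v ^ 2 / 2 ≤ FNL p v := by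
  have : 0 ≤ v ^ (p + 1) / (p + 1) := div_nonneg (Real.rpow_nonneg hv _) hp.le
  rw [FNL]
  linarith

theorem FNL_le_neg_sq_div_four (hp : 1 ≤ p) (hv : 0 ≤ v) (hsmall : v ^ (p - 1) ≤ 1 / 2) :
    FNL p v ≤ -v ^ 2 / 4 := by
  have hsplit : v ^ (p + 1) = v ^ (p - 1) * v ^ 2 := by
    rw [← Real.rpow_natCast, ← Real.rpow_add' hv (by norm_num; linarith)]
    ring_nf
  have hsq : v ^ (p + 1) ≤ v ^ 2 / 2 := by
    rw [hsplit]
    nlinarith [sq_nonneg v]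
  have : v ^ (p + 1) / (p + 1) ≤ v ^ 2 / 4 := by
    rw [div_le_iff₀ (by linarith)]
    nlinarith [Real.rpow_nonneg hv (p + 1)]
  rw [FNL]
  linarith

theorem one_lt_pSob (hN : 3 ≤ N) : 1 < pSob N := by
  have : (3 : ℝ) ≤ N := by exact_mod_cast hN
  rw [pSob, one_lt_div (by linarith)]
  linarith

theorem nat_mul_FNL_sub_mul_fNL_neg (hN : 3 ≤ N) (hpS : pSob N ≤ p) (hv : 0 < v) :
    N * FNL p v - ((N : ℝ) - 2) / 2 * (v * fNL p v) < 0 := by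
  have hN' : (3 : ℝ) ≤ N := by exact_mod_cast hN
  have hp : 0 < p + 1 := by linarith [one_lt_pSob hN]
  have hcrit : N / (p + 1) ≤ ((N : ℝ) - 2) / 2 := by
    rw [pSob, div_le_iff₀ (by linarith)] at hpS
    rw [div_le_div_iff₀ hp two_pos]
    linarith
  have hvp : v * v ^ p = v ^ (p + 1) := by rw [Real.rpow_add_one hv.ne', mul_comm]
  have key : N * FNL p v - ((N : ℝ) - 2) / 2 * (v * fNL p v)
      = -v ^ 2 + (N / (p + 1) - ((N : ℝ) - 2) / 2) * v ^ (p + 1) := by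
    rw [FNL, fNL, ← hvp]
    ring
  rw [key]
  nlinarith [mul_nonpos_of_nonpos_of_nonneg (sub_nonpos.2 hcrit)
    (Real.rpow_pos_of_pos hv (p + 1)).le]

end Nonlinearity

section RadialODE

variable {f F u u' u'' : ℝ → ℝ} {k s : ℝ}

theorem hasDerivAt_radialEnergy (hF : HasDerivAt F (f (u s)) (u s))
    (hu : HasDerivAt u (u' s) s) (hu' : HasDerivAt u' (u'' s) s)
    (hode : u'' s + k / s * u' s + f (u s) = 0) :
    HasDerivAt (radialEnergy F u u') (-(k / s) * u' s ^ 2) s := by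
  refine (((hu'.pow 2).div_const 2).add (hF.comp s hu)).congr_deriv ?_
  rw [show u'' s = -(k / s * u' s) - f (u s) by linarith]
  push_cast
  ring

theorem hasDerivAt_pohozaev {N : ℕ} (hN : 1 ≤ N) (hs : s ≠ 0)
    (hF : HasDerivAt F (f (u s)) (u s)) (hu : HasDerivAt u (u' s) s)
    (hu' : HasDerivAt u' (u'' s) s) (hode : u'' s + ((N : ℝ) - 1) / s * u' s + f (u s) = 0) :
    HasDerivAt (pohozaev N F u u')
      (s ^ (N - 1) * (N * F (u s) - ((N : ℝ) - 2) / 2 * (u s * f (u s)))) s := by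
  have hE := hasDerivAt_radialEnergy hF hu hu' hode
  have h := ((hasDerivAt_pow N s).mul hE).add
    ((((hasDerivAt_pow (N - 1) s).mul hu).mul hu').const_mul (((N : ℝ) - 2) / 2))
  refine h.congr_deriv ?_
  obtain ⟨n, rfl⟩ : ∃ n, N = n + 1 := ⟨N - 1, by omega⟩
  have hpow : (n : ℝ) * s ^ (n - 1) = n * s ^ n / s := by
    rcases n with _ | n
    · simp
    · field_simp
      simp [pow_succ]
  rw [show u'' s = -((((n + 1 : ℕ) : ℝ) - 1) / s * u' s) - f (u s) by linarith]
  simp only [radialEnergy, Nat.add_sub_cancel, Pi.mul_apply, hpow]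
  push_cast
  field_simp
  ring

theorem radialEnergy_antitoneOn (hk : 0 ≤ k) (hF : ∀ s > 0, HasDerivAt F (f (u s)) (u s))
    (hu : ∀ s > 0, HasDerivAt u (u' s) s) (hu' : ∀ s > 0, HasDerivAt u' (u'' s) s)
    (hode : ∀ s > 0, u'' s + k / s * u' s + f (u s) = 0) :
    AntitoneOn (radialEnergy F u u') (Ioi 0) := by
  have hE : ∀ s > 0, HasDerivAt (radialEnergy F u u') (-(k / s) * u' s ^ 2) s := fun s hs =>
    hasDerivAt_radialEnergy (hF s hs) (hu s hs) (hu' s hs) (hode s hs)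
  refine antitoneOn_of_hasDerivWithinAt_nonpos (f' := fun s => -(k / s) * u' s ^ 2)
    (convex_Ioi 0) (fun s hs => (hE s hs).continuousAt.continuousWithinAt)
    (fun s hs => ?_) (fun s hs => ?_) <;> rw [interior_Ioi] at hs
  · exact (hE s hs).hasDerivWithinAt
  · have : 0 ≤ k / s * u' s ^ 2 := mul_nonneg (div_nonneg hk hs.out.le) (sq_nonneg _)
    linarith

end RadialODE

section Decay

variable {p c : ℝ} {u u' : ℝ → ℝ}

theorem radialEnergy_nonneg (hp : 0 < p + 1)
    (hanti : AntitoneOn (radialEnergy (FNL p) u u') (Ioi 0))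
    (hpos : ∀ s > 0, 0 < u s) (hlim : Tendsto u atTop (𝓝 0)) {s : ℝ} (hs : 0 < s) :
    0 ≤ radialEnergy (FNL p) u u' s := by
  have hlim' : Tendsto (fun t => -u t ^ 2 / 2) atTop (𝓝 0) := by
    simpa using (hlim.pow 2).neg.div_const 2
  refine le_of_tendsto hlim' ?_
  filter_upwards [eventually_ge_atTop s] with t ht
  calc -u t ^ 2 / 2 ≤ FNL p (u t) := neg_sq_div_two_le_FNL hp (hpos t (hs.trans_le ht)).le
    _ ≤ radialEnergy (FNL p) u u' t := by
      rw [radialEnergy]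
      linarith [sq_nonneg (u' t)]
    _ ≤ radialEnergy (FNL p) u u' s := hanti hs (hs.trans_le ht) ht

theorem eventually_half_sq_le_deriv_sq (hp : 1 < p)
    (hE : ∀ s > 0, 0 ≤ radialEnergy (FNL p) u u' s)
    (hpos : ∀ s > 0, 0 < u s) (hlim : Tendsto u atTop (𝓝 0)) :
    ∀ᶠ s in atTop, (u s / 2) ^ 2 ≤ u' s ^ 2 := by
  have hsmall : ∀ᶠ s in atTop, u s ^ (p - 1) ≤ 1 / 2 := by
    have h := hlim.rpow_const (p := p - 1) (Or.inr (by linarith))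
    rw [Real.zero_rpow (by linarith)] at h
    exact h.eventually (ge_mem_nhds (by norm_num))
  filter_upwards [hsmall, eventually_gt_atTop 0] with s hsmall hs
  have hF := FNL_le_neg_sq_div_four hp.le (hpos s hs).le hsmall
  have hEs := hE s hs
  rw [radialEnergy] at hEs
  nlinarith [sq_nonneg (u s)]

theorem eventually_deriv_neg_of_tendsto_zero (hu : ∀ᶠ s in atTop, HasDerivAt u (u' s) s)
    (hne : ∀ᶠ s in atTop, u' s ≠ 0) (hpos : ∀ᶠ s in atTop, 0 < u s)
    (hlim : Tendsto u atTop (𝓝 0)) :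
    ∀ᶠ s in atTop, u' s < 0 := by
  obtain ⟨S, hS⟩ := eventually_atTop.1 (hu.and (hne.and hpos))
  rcases hasDerivWithinAt_forall_lt_or_forall_gt_of_forall_ne (convex_Ici S)
    (fun s hs => (hS s hs).1.hasDerivWithinAt) (fun s hs => (hS s hs).2.1) with hneg | hpos'
  · exact eventually_atTop.2 ⟨S, hneg⟩
  · have hmono : MonotoneOn u (Ici S) := monotoneOn_of_hasDerivWithinAt_nonneg (convex_Ici S)
      (fun s hs => (hS s hs).1.continuousAt.continuousWithinAt)
      (fun s hs => (hS s (interior_subset hs)).1.hasDerivWithinAt)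
      (fun s hs => (hpos' s (interior_subset hs)).le)
    have : u S ≤ 0 :=
      ge_of_tendsto hlim (eventually_atTop.2 ⟨S, fun s hs => hmono self_mem_Ici hs hs⟩)
    exact absurd (hS S le_rfl).2.2 this.not_gt

theorem eventually_deriv_le_neg_half_mul (hp : 1 < p)
    (hE : ∀ s > 0, 0 ≤ radialEnergy (FNL p) u u' s) (hu : ∀ s > 0, HasDerivAt u (u' s) s)
    (hpos : ∀ s > 0, 0 < u s) (hlim : Tendsto u atTop (𝓝 0)) :
    ∀ᶠ s in atTop, u' s ≤ -(1 / 2) * u s := by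
  have hpos' : ∀ᶠ s in atTop, 0 < u s := (eventually_gt_atTop 0).mono hpos
  have hsq := eventually_half_sq_le_deriv_sq hp hE hpos hlim
  have hneg : ∀ᶠ s in atTop, u' s < 0 := by
    refine eventually_deriv_neg_of_tendsto_zero ((eventually_gt_atTop 0).mono hu) ?_ hpos' hlim
    filter_upwards [hsq, hpos'] with s hsq hpos h0
    rw [h0] at hsq
    nlinarith
  filter_upwards [hsq, hneg, hpos'] with s hsq hneg hpos
  nlinarith

theorem isBigO_exp_of_deriv_le_neg_mul (hu : ∀ᶠ s in atTop, HasDerivAt u (u' s) s)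
    (hnn : ∀ᶠ s in atTop, 0 ≤ u s) (hdec : ∀ᶠ s in atTop, u' s ≤ -c * u s) :
    u =O[atTop] fun s => exp (-c * s) := by
  obtain ⟨S, hS⟩ := eventually_atTop.1 (hu.and (hnn.and hdec))
  have hg : ∀ s ∈ Ici S, HasDerivAt (fun t => u t * exp (c * t))
      ((u' s + c * u s) * exp (c * s)) s := fun s hs =>
    ((hS s hs).1.mul ((hasDerivAt_id s).const_mul c).exp).congr_deriv (by simp; ring)
  have hanti : AntitoneOn (fun t => u t * exp (c * t)) (Ici S) :=
    antitoneOn_of_hasDerivWithinAt_nonpos (convex_Ici S)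
      (fun s hs => (hg s hs).continuousAt.continuousWithinAt)
      (fun s hs => (hg s (interior_subset hs)).hasDerivWithinAt)
      (fun s hs => mul_nonpos_of_nonpos_of_nonneg
        (by linarith [(hS s (interior_subset hs)).2.2]) (exp_pos _).le)
  refine IsBigO.of_bound (u S * exp (c * S)) (eventually_atTop.2 ⟨S, fun s hs => ?_⟩)
  rw [Real.norm_of_nonneg (hS s hs).2.1, Real.norm_of_nonneg (exp_pos _).le]
  calc u s = u s * exp (c * s) * exp (-c * s) := by
        rw [mul_assoc, ← exp_add]
        simp
    _ ≤ u S * exp (c * S) * exp (-c * s) :=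
        mul_le_mul_of_nonneg_right (hanti self_mem_Ici hs hs) (exp_pos _).le

theorem isBigO_one_of_radialEnergy_antitoneOn (hp : 0 < p + 1)
    (hanti : AntitoneOn (radialEnergy (FNL p) u u') (Ioi 0))
    (hnn : ∀ᶠ s in atTop, 0 ≤ u s) (hlim : Tendsto u atTop (𝓝 0)) :
    u' =O[atTop] fun _ => (1 : ℝ) := by
  have hle : ∀ᶠ s in atTop, u s ≤ 1 := hlim.eventually (ge_mem_nhds one_pos)
  obtain ⟨S, hS⟩ := eventually_atTop.1 ((hnn.and hle).and (eventually_gt_atTop 0))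
  refine (isBigO_one_iff ℝ).2 <| isBoundedUnder_of_eventually_le
    (a := √(2 * radialEnergy (FNL p) u u' S + 1))
    (eventually_atTop.2 ⟨S, fun s hs => Real.abs_le_sqrt ?_⟩)
  have hEs := hanti (hS S le_rfl).2 (hS s hs).2 hs
  have hF := neg_sq_div_two_le_FNL hp (hS s hs).1.1
  rw [radialEnergy] at hEs
  nlinarith [(hS s hs).1.1, (hS s hs).1.2]

theorem tendsto_pow_mul_mul_deriv (n : ℕ) (hp : 1 < p)
    (hanti : AntitoneOn (radialEnergy (FNL p) u u') (Ioi 0))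
    (hu : ∀ s > 0, HasDerivAt u (u' s) s) (hpos : ∀ s > 0, 0 < u s)
    (hlim : Tendsto u atTop (𝓝 0)) :
    Tendsto (fun s => s ^ n * u s * u' s) atTop (𝓝 0) := by
  have hE : ∀ s > 0, 0 ≤ radialEnergy (FNL p) u u' s := fun s hs =>
    radialEnergy_nonneg (by linarith) hanti hpos hlim hs
  have hnn : ∀ᶠ s in atTop, 0 ≤ u s := (eventually_gt_atTop 0).mono fun s hs => (hpos s hs).le
  have hu_exp := isBigO_exp_of_deriv_le_neg_mul ((eventually_gt_atTop 0).mono hu) hnn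
    (eventually_deriv_le_neg_half_mul hp hE hu hpos hlim)
  have hu'_bdd := isBigO_one_of_radialEnergy_antitoneOn (by linarith) hanti hnn hlim
  refine (((isBigO_refl (fun s : ℝ => s ^ n) atTop).mul hu_exp).mul hu'_bdd).trans_tendsto ?_
  simpa using tendsto_rpow_mul_exp_neg_mul_atTop_nhds_zero n (1 / 2) (by norm_num)

end Decay

theorem pohozaev_strictAntiOn {N : ℕ} {p : ℝ} {u u' u'' : ℝ → ℝ} (hN : 3 ≤ N)
    (hpS : pSob N ≤ p) (hu : ∀ s ∈ Ici (0:ℝ), HasDerivWithinAt u (u' s) (Ici 0) s)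
    (hu' : ∀ s ∈ Ici (0:ℝ), HasDerivWithinAt u' (u'' s) (Ici 0) s)
    (hode : ∀ s > (0:ℝ), u'' s + ((N : ℝ) - 1) / s * u' s + fNL p (u s) = 0)
    (hpos : ∀ s ≥ (0:ℝ), 0 < u s) :
    StrictAntiOn (pohozaev N (FNL p) u u') (Ici 0) := by
  have hp : p + 1 ≠ 0 := by linarith [one_lt_pSob hN]
  have hF : ∀ s ≥ (0:ℝ), HasDerivAt (FNL p) (fNL p (u s)) (u s) := fun s hs =>
    hasDerivAt_FNL hp (hpos s hs)
  have hu_cont : ContinuousOn u (Ici 0) := fun s hs => (hu s hs).continuousWithinAt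
  have hu'_cont : ContinuousOn u' (Ici 0) := fun s hs => (hu' s hs).continuousWithinAt
  have hFu_cont : ContinuousOn (fun s => FNL p (u s)) (Ici 0) := fun s hs =>
    (hF s hs).continuousAt.comp_continuousWithinAt (hu_cont s hs)
  have hcont : ContinuousOn (pohozaev N (FNL p) u u') (Ici 0) :=
    ((continuousOn_pow N).mul (((hu'_cont.pow 2).div_const 2).add hFu_cont)).add
      (continuousOn_const.mul (((continuousOn_pow _).mul hu_cont).mul hu'_cont))
  have hderiv : ∀ s > (0:ℝ), HasDerivAt (pohozaev N (FNL p) u u')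
      (s ^ (N - 1) * (N * FNL p (u s) - ((N : ℝ) - 2) / 2 * (u s * fNL p (u s)))) s :=
    fun s hs => hasDerivAt_pohozaev (by omega) hs.ne' (hF s hs.le)
      ((hu s hs.le).hasDerivAt (Ici_mem_nhds hs))
      ((hu' s hs.le).hasDerivAt (Ici_mem_nhds hs)) (hode s hs)
  refine strictAntiOn_of_deriv_neg (convex_Ici 0) hcont fun s hs => ?_
  rw [interior_Ici] at hs
  rw [(hderiv s hs).deriv]
  exact mul_neg_of_pos_of_neg (pow_pos hs _)
    (nat_mul_FNL_sub_mul_fNL_neg hN hpS (hpos s hs.out.le))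

theorem no_entire_decaying_solution_general (N : ℕ) (hN : 3 ≤ N) (p : ℝ) (hp : 1 < p)
    (hpS : pSob N ≤ p)
    (u u' u'' : ℝ → ℝ)
    (hu : ∀ s ∈ Ici (0:ℝ), HasDerivWithinAt u (u' s) (Ici 0) s)
    (hu' : ∀ s ∈ Ici (0:ℝ), HasDerivWithinAt u' (u'' s) (Ici 0) s)
    (hode : ∀ s > (0:ℝ), u'' s + ((N : ℝ) - 1) / s * u' s + fNL p (u s) = 0)
    (hlim : Tendsto u atTop (𝓝 0))
    (hpos : ∀ s ≥ (0:ℝ), 0 < u s) :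
    False := by
  have huD : ∀ s > 0, HasDerivAt u (u' s) s := fun s hs =>
    (hu s hs.le).hasDerivAt (Ici_mem_nhds hs)
  have hu'D : ∀ s > 0, HasDerivAt u' (u'' s) s := fun s hs =>
    (hu' s hs.le).hasDerivAt (Ici_mem_nhds hs)
  have hpos' : ∀ s > 0, 0 < u s := fun s hs => hpos s hs.le
  have hE_anti := radialEnergy_antitoneOn (by norm_num; linarith : 0 ≤ (N : ℝ) - 1)
    (fun s hs => hasDerivAt_FNL (by linarith) (hpos' s hs)) huD hu'D hode
  have hP := pohozaev_strictAntiOn hN hpS hu hu' hode hpos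
  have hP1 : pohozaev N (FNL p) u u' 1 < 0 := by
    simpa [pohozaev, zero_pow (by omega : N ≠ 0), zero_pow (by omega : N - 1 ≠ 0)] using
      hP self_mem_Ici (mem_Ici.2 zero_le_one) one_pos
  have hP1_nonneg : 0 ≤ pohozaev N (FNL p) u u' 1 := by
    refine le_of_tendsto (by simpa using ((tendsto_pow_mul_mul_deriv (N - 1) hp hE_anti huD hpos'
      hlim).const_mul (((N : ℝ) - 2) / 2))) ?_
    filter_upwards [eventually_gt_atTop 1] with s hs
    calc _ ≤ pohozaev N (FNL p) u u' s := le_add_of_nonneg_left <| mul_nonneg (by positivity)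
          (radialEnergy_nonneg (by linarith) hE_anti hpos' hlim (by linarith))
      _ ≤ pohozaev N (FNL p) u u' 1 :=
          (hP (mem_Ici.2 zero_le_one) (mem_Ici.2 (by linarith)) hs).le
  linarith

/-- nonexistence of a positive entire solution decaying at infinity
for `p ≥ p_S`. -/
theorem no_entire_decaying_solution (N : ℕ) (hN : 3 ≤ N) (p : ℝ) (hp : 1 < p)
    (hpS : pSob N ≤ p)
    (u u' u'' : ℝ → ℝ)
    (hu : ∀ s ∈ Ici (0:ℝ), HasDerivWithinAt u (u' s) (Ici 0) s)
    (hu' : ∀ s ∈ Ici (0:ℝ), HasDerivWithinAt u' (u'' s) (Ici 0) s)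
    (hu'' : ContinuousOn u'' (Ici 0))
    (hode : ∀ s > (0:ℝ), u'' s + ((N : ℝ) - 1) / s * u' s + fNL p (u s) = 0)
    (hinit : u' 0 = 0)
    (hlim : Tendsto u atTop (𝓝 0))
    (hpos : ∀ s ≥ (0:ℝ), 0 < u s) :
    False :=
  no_entire_decaying_solution_general N hN p hp hpS u u' u'' hu hu' hode hlim hpos
end
end

section
/- Suppose p > p_S and let y ∈ C²((−∞,T]) satisfy y''(t) + α y'(t) − y(t) + y(t)^p − m² e^{2mt} y(t) = 0 for all t ≤ T and y(t) → 1 as t → −∞. Then there exist constants C > 0 and T' ≤ T such that |y(t) − 1| ≤ C e^{2mt} for all t ≤ T'. -/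
open Real Set Filter Topology MeasureTheory

noncomputable section

/-!
With `z = y - 1` the equation reads `z'' + α z' + (p - 1) z = r + e`, where
`r = -(y^p - y - (p - 1)(y - 1)) = o(z)` and `e = m² e^{2mt} y = O(e^{2mt})`. Since `α > 0` and
`p - 1 > 0`, a suitable quadratic energy `E(z, z')` of the damped oscillator satisfies
`E' + κ E ≤ C e²` as soon as `r` is small relative to `z`. Integrating against `e^{κt}` from `-∞`
(possible because `z'` is small at times arbitrarily far to the left, by the mean value theorem)
gives `E = O(e^{4mt})`, hence `z = O(e^{2mt})`.
-/

open Asymptotics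

lemma antitoneOn_Iic_of_hasDerivWithinAt_nonpos {f f' : ℝ → ℝ} {T : ℝ}
    (hf : ∀ t ∈ Iic T, HasDerivWithinAt f (f' t) (Iic T) t) (hf' : ∀ t < T, f' t ≤ 0) :
    AntitoneOn f (Iic T) :=
  antitoneOn_of_hasDerivWithinAt_nonpos (convex_Iic T)
    (fun t ht => (hf t ht).continuousWithinAt)
    (fun t ht => by
      rw [interior_Iic] at ht ⊢
      exact (hf t (mem_Iic.2 (le_of_lt ht))).mono Iio_subset_Iic_self)
    (fun t ht => hf' t (by rwa [interior_Iic] at ht))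

/-- `e^{κt} E t - D/(κ+μ) e^{(κ+μ)t}` is antitone and tends to a nonpositive limit along the times
where `E ≤ B`. -/
lemma le_mul_exp_of_hasDerivWithinAt_add_le {E E' : ℝ → ℝ} {T κ μ D B : ℝ}
    (hκ : 0 < κ) (hκμ : 0 < κ + μ)
    (hE : ∀ t ∈ Iic T, HasDerivWithinAt E (E' t) (Iic T) t)
    (hineq : ∀ t ∈ Iic T, E' t + κ * E t ≤ D * exp (μ * t))
    (hfreq : ∃ᶠ t in atBot, E t ≤ B) :
    ∀ t ∈ Iic T, E t ≤ D / (κ + μ) * exp (μ * t) := by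
  set Φ : ℝ → ℝ := fun s => exp (κ * s) * E s - D / (κ + μ) * exp ((κ + μ) * s)
  have hΦ : AntitoneOn Φ (Iic T) := by
    refine antitoneOn_Iic_of_hasDerivWithinAt_nonpos (f' := fun s =>
      exp (κ * s) * (E' s + κ * E s) - D * exp ((κ + μ) * s)) (fun t ht => ?_) (fun t ht => ?_)
    · have hexp (c : ℝ) : HasDerivWithinAt (fun s => exp (c * s)) (exp (c * t) * c) (Iic T) t := by
        simpa using ((hasDerivWithinAt_id t (Iic T)).const_mul c).exp
      refine (((hexp κ).mul (hE t ht)).sub ((hexp (κ + μ)).const_mul (D / (κ + μ)))).congr_deriv ?_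
      field_simp
      ring
    · have h := mul_le_mul_of_nonneg_left (hineq t ht.le) (exp_pos (κ * t)).le
      rw [show (κ + μ) * t = κ * t + μ * t by ring, exp_add]
      nlinarith
  have hlim : Tendsto (fun s => exp (κ * s) * B - D / (κ + μ) * exp ((κ + μ) * s)) atBot (𝓝 0) := by
    have h (c : ℝ) (hc : 0 < c) : Tendsto (fun s => exp (c * s)) atBot (𝓝 0) :=
      tendsto_exp_atBot.comp (tendsto_id.const_mul_atBot hc)
    simpa using ((h κ hκ).mul_const B).sub ((h _ hκμ).const_mul (D / (κ + μ)))
  intro t ht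
  suffices h : exp (κ * t) * E t - D / (κ + μ) * exp ((κ + μ) * t) ≤ 0 by
    rw [show (κ + μ) * t = κ * t + μ * t by ring, exp_add] at h
    nlinarith [exp_pos (κ * t)]
  by_contra! hpos
  change 0 < Φ t at hpos
  obtain ⟨s, hsB, hsmall, hst⟩ := (hfreq.and_eventually
    ((hlim.eventually (gt_mem_nhds hpos)).and (eventually_le_atBot t))).exists
  have h1 := hΦ (hst.trans ht) ht hst
  have h2 := mul_le_mul_of_nonneg_left hsB (exp_pos (κ * s)).le
  simp only [Φ] at h1
  linarith

lemma frequently_abs_deriv_le_of_tendsto_atBot {f f' : ℝ → ℝ} {T c η : ℝ} (hη : 0 < η)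
    (hf : ∀ t ∈ Iic T, HasDerivWithinAt f (f' t) (Iic T) t) (hlim : Tendsto f atBot (𝓝 c)) :
    ∃ᶠ t in atBot, |f' t| ≤ η := by
  obtain ⟨T₀, hT₀⟩ := eventually_atBot.1 (Metric.tendsto_nhds.1 hlim (η / 2) (half_pos hη))
  refine frequently_atBot.2 fun L => ?_
  set s := min L (min T₀ T)
  have hsT : s ≤ T := (min_le_right _ _).trans (min_le_right _ _)
  have hsT₀ : s ≤ T₀ := (min_le_right _ _).trans (min_le_left _ _)
  obtain ⟨ξ, hξ, hslope⟩ := exists_hasDerivAt_eq_slope f f' (sub_one_lt s)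
    (fun x hx => (hf x (hx.2.trans hsT)).continuousWithinAt.mono (Icc_subset_Iic_self.trans
      (Iic_subset_Iic.2 hsT)))
    (fun x hx => (hf x (hx.2.le.trans hsT)).hasDerivAt (Iic_mem_nhds (hx.2.trans_le hsT)))
  refine ⟨ξ, hξ.2.le.trans (min_le_left _ _), ?_⟩
  have h1 := hT₀ s hsT₀
  have h2 := hT₀ (s - 1) (by linarith)
  rw [hslope, sub_sub_cancel, div_one]
  rw [Real.dist_eq] at h1 h2
  calc |f s - f (s - 1)| ≤ |f s - c| + |c - f (s - 1)| := abs_sub_le _ _ _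
    _ ≤ η := by rw [abs_sub_comm c]; linarith

lemma rpow_sub_self_sub_mul_isLittleO (p : ℝ) :
    (fun u : ℝ => u ^ p - u - (p - 1) * (u - 1)) =o[𝓝 1] fun u => u - 1 := by
  have h : HasDerivAt (fun u : ℝ => u ^ p - u) (p - 1) 1 := by
    have h := (hasDerivAt_rpow_const (x := 1) (p := p) (Or.inl one_ne_zero)).sub (hasDerivAt_id' 1)
    rwa [one_rpow, mul_one] at h
  refine h.isLittleO.congr_left fun u => ?_
  simp only [one_rpow, sub_self, smul_eq_mul]
  ring

section DampedOscillator

variable {a q : ℝ}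

/-- An energy for `x'' + a x' + q x = 0` at `(x, v) = (x, x')`; the cross term `a x v / 2` makes its
decay rate `a/2 v² + a q/2 x²` positive definite. -/
def dampedEnergy (a q x v : ℝ) : ℝ := (v + a / 2 * x) ^ 2 / 2 + (q + a ^ 2 / 4) / 2 * x ^ 2

lemma mul_sq_le_dampedEnergy (x v : ℝ) : q / 2 * x ^ 2 ≤ dampedEnergy a q x v := by
  unfold dampedEnergy
  nlinarith [sq_nonneg (v + a / 2 * x), sq_nonneg (a * x)]

lemma dampedEnergy_le (hq : 0 ≤ q) (x v : ℝ) :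
    dampedEnergy a q x v ≤ (1 + q + a ^ 2) * (x ^ 2 + v ^ 2) := by
  unfold dampedEnergy
  nlinarith [sq_nonneg (v - a / 2 * x), sq_nonneg (a * x), sq_nonneg v, mul_nonneg hq (sq_nonneg x)]

lemma hasDerivWithinAt_dampedEnergy {x x' x'' : ℝ → ℝ} {s : Set ℝ} {t : ℝ}
    (hx : HasDerivWithinAt x (x' t) s t) (hx' : HasDerivWithinAt x' (x'' t) s t) :
    HasDerivWithinAt (fun t => dampedEnergy a q (x t) (x' t))
      ((x' t + a / 2 * x t) * (x'' t + a * x' t + q * x t)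
        - a / 2 * x' t ^ 2 - a * q / 2 * x t ^ 2) s t := by
  have hu : HasDerivWithinAt (fun t => x' t + a / 2 * x t) (x'' t + a / 2 * x' t) s t :=
    hx'.add (hx.const_mul (a / 2))
  refine (((hu.pow 2).div_const 2).add ((hx.pow 2).const_mul ((q + a ^ 2 / 4) / 2))).congr_deriv ?_
  push_cast
  ring

lemma exists_dampedEnergy_dissipation (ha : 0 < a) (hq : 0 < q) :
    ∃ κ > 0, ∃ ν > 0, ∃ C ≥ 0, ∀ x v r e : ℝ, |r| ≤ ν * |x| →
      (v + a / 2 * x) * (r + e) - a / 2 * v ^ 2 - a * q / 2 * x ^ 2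
        + κ * dampedEnergy a q x v ≤ C * e ^ 2 := by
  set c := a / 2 * min 1 q
  have hc : 0 < c := mul_pos (half_pos ha) (lt_min one_pos hq)
  have hca : c ≤ a / 2 := mul_le_of_le_one_right (half_pos ha).le (min_le_left _ _)
  have hcq : c ≤ a * q / 2 := by
    have := mul_le_mul_of_nonneg_left (min_le_right 1 q) (half_pos ha).le
    exact this.trans_eq (by ring)
  have hK : 0 < 1 + q + a ^ 2 := by positivity
  have hL : 0 < 2 + a ^ 2 := by positivity
  refine ⟨c / (4 * (1 + q + a ^ 2)), by positivity, c / (1 + a), by positivity,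
    (2 + a ^ 2) / c, by positivity, fun x v r e hr => ?_⟩
  set s := x ^ 2 + v ^ 2
  have hdecay : -(a / 2 * v ^ 2) - a * q / 2 * x ^ 2 ≤ -(c * s) := by
    nlinarith [mul_le_mul_of_nonneg_right hca (sq_nonneg v),
      mul_le_mul_of_nonneg_right hcq (sq_nonneg x)]
  have hpert : (v + a / 2 * x) * r ≤ c / 2 * s := by
    have h1 : (v + a / 2 * x) * r ≤ (|v| + a / 2 * |x|) * (c / (1 + a) * |x|) := by
      calc (v + a / 2 * x) * r ≤ |v + a / 2 * x| * |r| := by rw [← abs_mul]; exact le_abs_self _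
        _ ≤ (|v| + a / 2 * |x|) * (c / (1 + a) * |x|) := by
          gcongr
          calc |v + a / 2 * x| ≤ |v| + |a / 2 * x| := abs_add_le _ _
            _ = |v| + a / 2 * |x| := by rw [abs_mul, abs_of_pos (half_pos ha)]
    have h2 : (|v| + a / 2 * |x|) * |x| ≤ (1 + a) / 2 * s := by
      nlinarith [sq_nonneg (|v| - |x|), sq_abs v, sq_abs x, abs_nonneg x]
    calc (v + a / 2 * x) * r ≤ c / (1 + a) * ((|v| + a / 2 * |x|) * |x|) := by linarith
      _ ≤ c / (1 + a) * ((1 + a) / 2 * s) := by gcongr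
      _ = c / 2 * s := by field_simp
  have hforce : (v + a / 2 * x) * e ≤ c / 4 * s + (2 + a ^ 2) / c * e ^ 2 := by
    set u := v + a / 2 * x
    have hu : u ^ 2 ≤ (2 + a ^ 2) * s := by
      show (v + a / 2 * x) ^ 2 ≤ (2 + a ^ 2) * (x ^ 2 + v ^ 2)
      nlinarith [sq_nonneg (v - a / 2 * x), sq_nonneg (a * x)]
    have hyoung : u * e ≤ c / (4 * (2 + a ^ 2)) * u ^ 2 + (2 + a ^ 2) / c * e ^ 2 := by
      rw [← sub_nonneg]
      have : c / (4 * (2 + a ^ 2)) * u ^ 2 + (2 + a ^ 2) / c * e ^ 2 - u * e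
          = (c * u - 2 * (2 + a ^ 2) * e) ^ 2 / (4 * c * (2 + a ^ 2)) := by
        field_simp
        ring
      rw [this]
      positivity
    calc u * e ≤ c / (4 * (2 + a ^ 2)) * ((2 + a ^ 2) * s) + (2 + a ^ 2) / c * e ^ 2 := by
          nlinarith [mul_le_mul_of_nonneg_left hu (by positivity : 0 ≤ c / (4 * (2 + a ^ 2)))]
      _ = c / 4 * s + (2 + a ^ 2) / c * e ^ 2 := by field_simp
  have henergy : c / (4 * (1 + q + a ^ 2)) * dampedEnergy a q x v ≤ c / 4 * s := by
    calc c / (4 * (1 + q + a ^ 2)) * dampedEnergy a q x v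
        ≤ c / (4 * (1 + q + a ^ 2)) * ((1 + q + a ^ 2) * s) := by
          gcongr; exact dampedEnergy_le hq.le x v
      _ = c / 4 * s := by field_simp
  linarith

lemma frequently_dampedEnergy_le (hq : 0 ≤ q) {x x' : ℝ → ℝ} {T : ℝ}
    (hx : ∀ t ∈ Iic T, HasDerivWithinAt x (x' t) (Iic T) t) (hlim : Tendsto x atBot (𝓝 0)) :
    ∃ᶠ t in atBot, dampedEnergy a q (x t) (x' t) ≤ 2 * (1 + q + a ^ 2) := by
  have hsmall : ∀ᶠ t in atBot, |x t| ≤ 1 := by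
    simpa using hlim.eventually (Metric.closedBall_mem_nhds 0 one_pos)
  refine ((frequently_abs_deriv_le_of_tendsto_atBot one_pos hx hlim).and_eventually hsmall).mono
    fun t ⟨hx't, hxt⟩ => (dampedEnergy_le hq _ _).trans ?_
  have : x t ^ 2 + x' t ^ 2 ≤ 2 := by
    nlinarith [sq_abs (x t), sq_abs (x' t), abs_nonneg (x t), abs_nonneg (x' t)]
  nlinarith

end DampedOscillator

theorem isBigO_exp_of_damped_oscillator {a q μ T : ℝ} (ha : 0 < a) (hq : 0 < q) (hμ : 0 < μ)
    {z z' z'' r e : ℝ → ℝ}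
    (hz : ∀ t ∈ Iic T, HasDerivWithinAt z (z' t) (Iic T) t)
    (hz' : ∀ t ∈ Iic T, HasDerivWithinAt z' (z'' t) (Iic T) t)
    (hode : ∀ t ∈ Iic T, z'' t + a * z' t + q * z t = r t + e t)
    (hlim : Tendsto z atBot (𝓝 0)) (hr : r =o[atBot] z) (he : e =O[atBot] fun t => exp (μ * t)) :
    z =O[atBot] fun t => exp (μ * t) := by
  obtain ⟨κ, hκ, ν, hν, C, hC, hdiss⟩ := exists_dampedEnergy_dissipation ha hq
  obtain ⟨C₀, hC₀⟩ := he.bound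
  obtain ⟨T₁, hT₁⟩ := eventually_atBot.1 ((hr.def hν).and hC₀)
  set T₂ := min T₁ T
  have hT₂ : Iic T₂ ⊆ Iic T := Iic_subset_Iic.2 (min_le_right _ _)
  have hineq : ∀ t ∈ Iic T₂, ((z' t + a / 2 * z t) * (z'' t + a * z' t + q * z t)
      - a / 2 * z' t ^ 2 - a * q / 2 * z t ^ 2) + κ * dampedEnergy a q (z t) (z' t)
        ≤ C * C₀ ^ 2 * exp (2 * μ * t) := by
    intro t ht
    obtain ⟨hrt, het⟩ := hT₁ t (ht.trans (min_le_left _ _))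
    simp only [Real.norm_eq_abs, abs_exp] at hrt het
    have he2 : e t ^ 2 ≤ C₀ ^ 2 * exp (2 * μ * t) := by
      rw [show 2 * μ * t = μ * t + μ * t by ring, exp_add, ← sq_abs, ← sq, ← mul_pow]
      exact pow_le_pow_left₀ (abs_nonneg _) het 2
    rw [hode t (hT₂ ht)]
    calc _ ≤ C * e t ^ 2 := hdiss _ _ _ _ hrt
      _ ≤ C * (C₀ ^ 2 * exp (2 * μ * t)) := by gcongr
      _ = _ := by ring
  have hbound := le_mul_exp_of_hasDerivWithinAt_add_le hκ (by positivity)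
    (fun t ht => hasDerivWithinAt_dampedEnergy ((hz t (hT₂ ht)).mono hT₂)
      ((hz' t (hT₂ ht)).mono hT₂)) hineq (frequently_dampedEnergy_le hq.le hz hlim)
  refine IsBigO.of_pow two_ne_zero (IsBigO.of_bound (2 / q * (C * C₀ ^ 2 / (κ + 2 * μ))) ?_)
  filter_upwards [eventually_le_atBot T₂] with t ht
  have h := (mul_sq_le_dampedEnergy (a := a) (z t) (z' t)).trans (hbound t ht)
  rw [Pi.pow_apply, Pi.pow_apply, norm_pow, norm_pow, Real.norm_eq_abs, Real.norm_eq_abs, sq_abs,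
    abs_exp, ← exp_nat_mul]
  calc z t ^ 2 = 2 / q * (q / 2 * z t ^ 2) := by field_simp
    _ ≤ 2 / q * (C * C₀ ^ 2 / (κ + 2 * μ) * exp (2 * μ * t)) := by gcongr
    _ = _ := by push_cast; ring_nf

lemma sub_two_pos_of_three_le {N : ℕ} (hN : 3 ≤ N) : (0 : ℝ) < N - 2 := by
  have : (3 : ℝ) ≤ N := by exact_mod_cast hN
  linarith

lemma one_lt_of_pSob_lt {N : ℕ} {p : ℝ} (hN : 3 ≤ N) (hp : pSob N < p) : 1 < p := by
  have hN' := sub_two_pos_of_three_le hN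
  refine lt_trans ?_ hp
  rw [pSob, one_lt_div hN']
  linarith

lemma two_mul_thetaP_lt_of_pSob_lt {N : ℕ} {p : ℝ} (hN : 3 ≤ N) (hp : pSob N < p) :
    2 * thetaP p < N - 2 := by
  have hN' := sub_two_pos_of_three_le hN
  have hp1 : 0 < p - 1 := sub_pos.2 (one_lt_of_pSob_lt hN hp)
  rw [pSob, div_lt_iff₀ hN'] at hp
  rw [thetaP, ← mul_div_assoc, div_lt_iff₀ hp1]
  linarith

lemma mConst_pos {N : ℕ} {p : ℝ} (hN : 3 ≤ N) (hp : pSob N < p) : 0 < mConst N p := by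
  have hθ : 0 < thetaP p := div_pos two_pos (sub_pos.2 (one_lt_of_pSob_lt hN hp))
  have := two_mul_thetaP_lt_of_pSob_lt hN hp
  exact rpow_pos_of_pos (mul_pos hθ (by linarith)) _

lemma alphaConst_pos {N : ℕ} {p : ℝ} (hN : 3 ≤ N) (hp : pSob N < p) : 0 < alphaConst N p :=
  mul_pos (mConst_pos hN hp) (by linarith [two_mul_thetaP_lt_of_pSob_lt hN hp])

theorem singular_solution_rate_general (N : ℕ) (hN : 3 ≤ N) (p : ℝ)
    (hpS : pSob N < p)
    (T : ℝ) (y y' y'' : ℝ → ℝ) (hy : IsSingODEOn N p T y y' y'') :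
    ∃ C > (0:ℝ), ∃ T' ≤ T, ∀ t ≤ T',
      |y t - 1| ≤ C * Real.exp (2 * mConst N p * t) := by
  obtain ⟨hy', hy'', -, hode, hlim⟩ := hy
  set m := mConst N p
  have hforce : (fun t => m ^ 2 * exp (2 * m * t) * y t) =O[atBot] fun t => exp (2 * m * t) := by
    simpa using ((isBigO_const_mul_self (m ^ 2) _ atBot).mul (hlim.isBigO_one ℝ))
  have hrate : (fun t => y t - 1) =O[atBot] fun t => exp (2 * m * t) :=
    isBigO_exp_of_damped_oscillator (alphaConst_pos hN hpS) (sub_pos.2 (one_lt_of_pSob_lt hN hpS))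
      (mul_pos two_pos (mConst_pos hN hpS)) (fun t ht => (hy' t ht).sub_const 1) hy''
      (fun t ht => by simp only [Function.comp_apply]; linarith [hode t ht])
      (by simpa using hlim.sub_const 1)
      ((rpow_sub_self_sub_mul_isLittleO p).comp_tendsto hlim).neg_left hforce
  obtain ⟨C, hC, hCbound⟩ := hrate.exists_pos
  obtain ⟨T₀, hT₀⟩ := eventually_atBot.1 hCbound.bound
  refine ⟨C, hC, min T₀ T, min_le_right _ _, fun t ht => ?_⟩
  simpa [Real.norm_eq_abs, abs_exp] using hT₀ t (ht.trans (min_le_left _ _))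

/-- the singular solution satisfies `y(t) = 1 + O(e^{2mt})` as `t → -∞`. -/
theorem singular_solution_rate (N : ℕ) (hN : 3 ≤ N) (p : ℝ) (hp : 1 < p)
    (hpS : pSob N < p)
    (T : ℝ) (y y' y'' : ℝ → ℝ) (hy : IsSingODEOn N p T y y' y'') :
    ∃ C > (0:ℝ), ∃ T' ≤ T, ∀ t ≤ T',
      |y t - 1| ≤ C * Real.exp (2 * mConst N p * t) :=
  singular_solution_rate_general N hN p hpS T y y' y'' hy
end
end

section
/- Let p > 1. For 0 < γ < 1 let s₁(γ) denote the first positive critical point of u(·,γ). Then s₁(γ) → ∞ as γ → 0⁺; equivalently λ₁(γ) := s₁(γ)² → ∞ as γ → 0⁺. -/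
open Real Set Filter Topology MeasureTheory

noncomputable section

/-!
While `0 < u < 1` the flux `s^(N-1) u'` is strictly increasing, because `f(u) < 0` there and
`u'(0) = 0`. Hence `u' > 0` up to the first critical point `S`, and `u(S) ≥ 1`. Up to the first
point `c ≤ S` with `u(c) = 1`, the function `s^N u / N - s^(N-1) u'` is nondecreasing (as
`f(u) ≥ -u`), so `u' ≤ s u / N`, and comparison with the Gaussian gives
`1 = u(c) ≤ γ exp(c² / (2N))`, i.e. `S² ≥ c² ≥ 2N log(1/γ)`.
-/

structure IsRadialSolution (N : ℕ) (f : ℝ → ℝ) (u u' u'' : ℝ → ℝ) : Prop where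
  continuousOn : ContinuousOn u (Ici 0)
  continuousOn_deriv : ContinuousOn u' (Ici 0)
  hasDerivAt : ∀ s > 0, HasDerivAt u (u' s) s
  hasDerivAt_deriv : ∀ s > 0, HasDerivAt u' (u'' s) s
  ode : ∀ s > 0, u'' s + ((N : ℝ) - 1) / s * u' s + f (u s) = 0

lemma IsIVPSol.isRadialSolution {N : ℕ} {p γ : ℝ} {u u' u'' : ℝ → ℝ}
    (h : IsIVPSol N p γ u u' u'') : IsRadialSolution N (fNL p) u u' u'' where
  continuousOn s hs := (h.1 s hs).continuousWithinAt
  continuousOn_deriv s hs := (h.2.1 s hs).continuousWithinAt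
  hasDerivAt s hs := (h.1 s hs.le).hasDerivAt (Ici_mem_nhds hs)
  hasDerivAt_deriv s hs := (h.2.1 s hs.le).hasDerivAt (Ici_mem_nhds hs)
  ode := h.2.2.2.2.2

lemma fNL_neg {p x : ℝ} (hp : 1 < p) (hx : x ∈ Ioo 0 1) : fNL p x < 0 := by
  have : x ^ p < x ^ (1 : ℝ) := Real.rpow_lt_rpow_of_exponent_gt hx.1 hx.2 hp
  rw [Real.rpow_one] at this
  unfold fNL
  linarith

lemma neg_le_fNL {p x : ℝ} (hx : 0 ≤ x) : -x ≤ fNL p x := by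
  unfold fNL
  linarith [Real.rpow_nonneg hx p]

lemma le_mul_exp_of_deriv_le_mul {u u' : ℝ → ℝ} {a c : ℝ} (hc : 0 ≤ c)
    (hu : ContinuousOn u (Icc 0 c)) (hu' : ∀ s ∈ Ioo 0 c, HasDerivAt u (u' s) s)
    (hle : ∀ s ∈ Ioo 0 c, u' s ≤ a * s * u s) :
    u c ≤ u 0 * exp (a * c ^ 2 / 2) := by
  have hweight : ∀ s, HasDerivAt (fun t => exp (-(a * t ^ 2 / 2)))
      (-(a * s) * exp (-(a * s ^ 2 / 2))) s := fun s => by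
    refine (((hasDerivAt_pow 2 s).const_mul a).div_const 2).fun_neg.exp.congr_deriv ?_
    push_cast
    ring
  have hanti : AntitoneOn (fun t => u t * exp (-(a * t ^ 2 / 2))) (Icc 0 c) := by
    refine antitoneOn_of_hasDerivWithinAt_nonpos (convex_Icc 0 c)
      (hu.mul (by fun_prop)) (f' := fun s => (u' s - a * s * u s) * exp (-(a * s ^ 2 / 2)))
      ?_ ?_ <;> rw [interior_Icc] <;> intro s hs
    · refine ((hu' s hs).fun_mul (hweight s)).hasDerivWithinAt.congr_deriv ?_
      ring
    · exact mul_nonpos_of_nonpos_of_nonneg (by linarith [hle s hs]) (exp_pos _).le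
  have hc0 : u c * exp (-(a * c ^ 2 / 2)) ≤ u 0 := by
    simpa using hanti ⟨le_rfl, hc⟩ ⟨hc, le_rfl⟩ hc
  calc u c = u c * exp (-(a * c ^ 2 / 2)) * exp (a * c ^ 2 / 2) := by
        rw [mul_assoc, ← exp_add, neg_add_cancel, exp_zero, mul_one]
    _ ≤ u 0 * exp (a * c ^ 2 / 2) := mul_le_mul_of_nonneg_right hc0 (exp_pos _).le

namespace IsRadialSolution

variable {N : ℕ} {f u u' u'' : ℝ → ℝ}

lemma hasDerivAt_flux (h : IsRadialSolution N f u u' u'') (hN : 1 ≤ N) {s : ℝ} (hs : 0 < s) :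
    HasDerivAt (fun t => t ^ (N - 1) * u' t) (-(s ^ (N - 1) * f (u s))) s := by
  refine ((hasDerivAt_pow (N - 1) s).fun_mul (h.hasDerivAt_deriv s hs)).congr_deriv ?_
  obtain ⟨n, rfl⟩ := Nat.exists_eq_add_of_le' hN
  have hu'' : u'' s = -(n / s * u' s) - f (u s) := by
    have := h.ode s hs
    push_cast at this
    rw [add_sub_cancel_right] at this
    linarith
  rcases n with _ | n
  · simp [hu'']
  · rw [hu'']
    field_simp
    push_cast
    ring

lemma deriv_pos_of_forall_mem_Ioo (h : IsRadialSolution N f u u' u'') (hN : 1 ≤ N)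
    (hf : ∀ x ∈ Ioo 0 1, f x < 0) (h0 : u' 0 = 0) {c : ℝ} (hc : 0 < c)
    (hu : ∀ s ∈ Ioo 0 c, u s ∈ Ioo 0 1) : 0 < u' c := by
  have hflux : StrictMonoOn (fun t => t ^ (N - 1) * u' t) (Icc 0 c) := by
    refine strictMonoOn_of_hasDerivWithinAt_pos (convex_Icc 0 c)
      ((continuousOn_pow _).mul (h.continuousOn_deriv.mono Icc_subset_Ici_self))
      (f' := fun s => -(s ^ (N - 1) * f (u s))) ?_ ?_ <;> rw [interior_Icc] <;> intro s hs
    · exact (h.hasDerivAt_flux hN hs.1).hasDerivWithinAt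
    · exact neg_pos.2 (mul_neg_of_pos_of_neg (pow_pos hs.1 _) (hf _ (hu s hs)))
  have := hflux ⟨le_rfl, hc.le⟩ ⟨hc.le, le_rfl⟩ hc
  simp only [h0, mul_zero] at this
  exact pos_of_mul_pos_right this (pow_nonneg hc.le _)

lemma deriv_pos_of_forall_ne_zero (h : IsRadialSolution N f u u' u'') (hN : 1 ≤ N)
    (hf : ∀ x ∈ Ioo 0 1, f x < 0) (hγ : u 0 ∈ Ioo 0 1) (h0 : u' 0 = 0) {S : ℝ}
    (hS : ∀ x ∈ Ioo 0 S, u' x ≠ 0) :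
    ∀ x ∈ Ioo 0 S, 0 < u' x := by
  intro x hx
  obtain ⟨δ, hδ, hδu⟩ : ∃ δ > 0, Ico 0 δ ⊆ u ⁻¹' Ioo 0 1 :=
    mem_nhdsGE_iff_exists_Ico_subset.1
      ((h.continuousOn 0 self_mem_Ici).preimage_mem_nhdsWithin (isOpen_Ioo.mem_nhds hγ))
  set c := min x (δ / 2)
  have hc : 0 < c := lt_min hx.1 (half_pos hδ)
  have hc_pos : 0 < u' c := h.deriv_pos_of_forall_mem_Ioo hN hf h0 hc fun s hs =>
    hδu ⟨hs.1.le, hs.2.trans_le (min_le_right _ _) |>.trans (half_lt_self hδ)⟩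
  by_contra! hx_nonpos
  obtain ⟨z, hz, hz0⟩ : ∃ z ∈ Icc c x, u' z = 0 :=
    intermediate_value_Icc' (min_le_left _ _)
      (h.continuousOn_deriv.mono fun t ht => hc.le.trans ht.1) ⟨hx_nonpos, hc_pos.le⟩
  exact hS z ⟨hc.trans_le hz.1, hz.2.trans_lt hx.2⟩ hz0

lemma monotoneOn_Icc (h : IsRadialSolution N f u u' u'') {S : ℝ}
    (hu' : ∀ x ∈ Ioo 0 S, 0 ≤ u' x) : MonotoneOn u (Icc 0 S) :=
  monotoneOn_of_hasDerivWithinAt_nonneg (convex_Icc 0 S) (h.continuousOn.mono Icc_subset_Ici_self)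
    (by rw [interior_Icc]; exact fun s hs => (h.hasDerivAt s hs.1).hasDerivWithinAt)
    (by rwa [interior_Icc])

lemma one_le_of_deriv_eq_zero (h : IsRadialSolution N f u u' u'') (hN : 1 ≤ N)
    (hf : ∀ x ∈ Ioo 0 1, f x < 0) (hγ : u 0 ∈ Ioo 0 1) (h0 : u' 0 = 0) {S : ℝ}
    (hS0 : 0 < S) (hS1 : u' S = 0) (hS2 : ∀ x ∈ Ioo 0 S, u' x ≠ 0) : 1 ≤ u S := by
  by_contra! hlt
  have hmono := h.monotoneOn_Icc fun x hx =>
    (h.deriv_pos_of_forall_ne_zero hN hf hγ h0 hS2 x hx).le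
  have := h.deriv_pos_of_forall_mem_Ioo hN hf h0 hS0 fun s hs =>
    ⟨hγ.1.trans_le (hmono ⟨le_rfl, hS0.le⟩ (Ioo_subset_Icc_self hs) hs.1.le),
      (hmono (Ioo_subset_Icc_self hs) ⟨hS0.le, le_rfl⟩ hs.2.le).trans_lt hlt⟩
  exact this.ne' hS1

lemma deriv_le_mul_self (h : IsRadialSolution N f u u' u'') (hN : 1 ≤ N) (h0 : u' 0 = 0) {c : ℝ}
    (hf : ∀ s ∈ Ioo 0 c, -u s ≤ f (u s)) (hu' : ∀ s ∈ Ioo 0 c, 0 ≤ u' s) {s : ℝ}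
    (hs : s ∈ Ioc 0 c) : u' s ≤ (N : ℝ)⁻¹ * s * u s := by
  have hN' : (0 : ℝ) < N := by exact_mod_cast hN
  have hmono : MonotoneOn (fun t => t ^ N * u t / N - t ^ (N - 1) * u' t) (Icc 0 c) := by
    refine monotoneOn_of_hasDerivWithinAt_nonneg (convex_Icc 0 c)
      ((((continuousOn_pow _).mul (h.continuousOn.mono Icc_subset_Ici_self)).div_const _).sub
        ((continuousOn_pow _).mul (h.continuousOn_deriv.mono Icc_subset_Ici_self)))
      (f' := fun t => t ^ N * u' t / N + t ^ (N - 1) * (u t + f (u t))) ?_ ?_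
      <;> rw [interior_Icc] <;> intro t ht
    · refine ((((hasDerivAt_pow N t).fun_mul (h.hasDerivAt t ht.1)).div_const _).sub
        (h.hasDerivAt_flux hN ht.1)).hasDerivWithinAt.congr_deriv ?_
      obtain ⟨n, rfl⟩ := Nat.exists_eq_add_of_le' hN
      field_simp
      ring
    · have := pow_pos ht.1 N
      have := pow_pos ht.1 (N - 1)
      have := hu' t ht
      have := hf t ht
      exact add_nonneg (by positivity) (mul_nonneg (by positivity) (by linarith))
  have hφ := hmono ⟨le_rfl, hs.1.le.trans hs.2⟩ ⟨hs.1.le, hs.2⟩ hs.1.le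
  simp only [zero_pow (by omega : N ≠ 0), h0, zero_mul, mul_zero, zero_div, sub_zero,
    sub_nonneg] at hφ
  refine le_of_mul_le_mul_left ?_ (pow_pos hs.1 (N - 1))
  calc s ^ (N - 1) * u' s ≤ s ^ N * u s / N := hφ
    _ = s ^ (N - 1) * ((N : ℝ)⁻¹ * s * u s) := by
      rw [← pow_sub_one_mul (by omega : N ≠ 0)]
      ring

lemma two_mul_log_inv_le_sq (h : IsRadialSolution N f u u' u'') (hN : 1 ≤ N)
    (hf_neg : ∀ x ∈ Ioo 0 1, f x < 0) (hf_ge : ∀ x ∈ Ioc 0 1, -x ≤ f x)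
    (hγ : u 0 ∈ Ioo 0 1) (h0 : u' 0 = 0) {S : ℝ} (hS0 : 0 < S) (hS1 : u' S = 0)
    (hS2 : ∀ x ∈ Ioo 0 S, u' x ≠ 0) :
    2 * N * log (u 0)⁻¹ ≤ S ^ 2 := by
  have hpos := h.deriv_pos_of_forall_ne_zero hN hf_neg hγ h0 hS2
  have hmono := h.monotoneOn_Icc fun x hx => (hpos x hx).le
  obtain ⟨c, hc, huc⟩ : ∃ c ∈ Icc 0 S, u c = 1 :=
    intermediate_value_Icc hS0.le (h.continuousOn.mono Icc_subset_Ici_self)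
      ⟨hγ.2.le, h.one_le_of_deriv_eq_zero hN hf_neg hγ h0 hS0 hS1 hS2⟩
  have hu_mem : ∀ s ∈ Ioo 0 c, u s ∈ Ioc 0 1 := fun s hs =>
    ⟨hγ.1.trans_le (hmono ⟨le_rfl, hS0.le⟩ ⟨hs.1.le, hs.2.le.trans hc.2⟩ hs.1.le),
      huc ▸ hmono ⟨hs.1.le, hs.2.le.trans hc.2⟩ hc hs.2.le⟩
  have hgauss : 1 ≤ u 0 * exp ((N : ℝ)⁻¹ * c ^ 2 / 2) :=
    huc ▸ le_mul_exp_of_deriv_le_mul hc.1 (h.continuousOn.mono Icc_subset_Ici_self)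
      (fun s hs => h.hasDerivAt s hs.1) fun s hs =>
        h.deriv_le_mul_self hN h0 (fun t ht => hf_ge _ (hu_mem t ht))
          (fun t ht => (hpos t ⟨ht.1, ht.2.trans_le hc.2⟩).le) (Ioo_subset_Ioc_self hs)
  have hlog : log (u 0)⁻¹ ≤ (N : ℝ)⁻¹ * c ^ 2 / 2 := by
    rwa [log_le_iff_le_exp (inv_pos.2 hγ.1), inv_le_iff_one_le_mul₀' hγ.1]
  have hN' : (0 : ℝ) < N := by exact_mod_cast hN
  calc 2 * N * log (u 0)⁻¹ ≤ 2 * N * ((N : ℝ)⁻¹ * c ^ 2 / 2) := by gcongr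
    _ = c ^ 2 := by field_simp
    _ ≤ S ^ 2 := pow_le_pow_left₀ hc.1 hc.2 2

end IsRadialSolution

/-- Corollary 7.10: the first positive critical point `s₁(γ)` of
`u(·,γ)` tends to `∞` as `γ → 0⁺`; equivalently `λ₁(γ) = s₁(γ)² → ∞`. -/
theorem first_critical_point_blows_up (N : ℕ) (hN : 3 ≤ N) (p : ℝ) (hp : 1 < p)
    (U U' U'' : ℝ → ℝ → ℝ)
    (hU : ∀ γ ∈ Ioo (0:ℝ) 1, IsIVPSol N p γ (U γ) (U' γ) (U'' γ))
    (S : ℝ → ℝ)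
    (hS : ∀ γ ∈ Ioo (0:ℝ) 1, 0 < S γ ∧ U' γ (S γ) = 0 ∧
      ∀ x ∈ Ioo 0 (S γ), U' γ x ≠ 0) :
    Tendsto S (𝓝[>] (0:ℝ)) atTop ∧
    Tendsto (fun γ => S γ ^ 2) (𝓝[>] (0:ℝ)) atTop := by
  have hbound : ∀ γ ∈ Ioo (0:ℝ) 1, 2 * N * log γ⁻¹ ≤ S γ ^ 2 := fun γ hγ => by
    obtain ⟨-, -, -, hU0, hU'0, -⟩ := hU γ hγ
    obtain ⟨hS0, hS1, hS2⟩ := hS γ hγ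
    simpa only [hU0] using (hU γ hγ).isRadialSolution.two_mul_log_inv_le_sq (by omega)
      (fun x hx => fNL_neg hp hx) (fun x hx => neg_le_fNL hx.1.le) (by rwa [hU0]) hU'0 hS0 hS1 hS2
  have hγ_mem : ∀ᶠ γ in 𝓝[>] (0:ℝ), γ ∈ Ioo (0:ℝ) 1 := Ioo_mem_nhdsGT one_pos
  have hlog : Tendsto (fun γ : ℝ => 2 * N * log γ⁻¹) (𝓝[>] 0) atTop :=
    (tendsto_log_atTop.comp tendsto_inv_nhdsGT_zero).const_mul_atTop (by positivity)
  have hsq : Tendsto (fun γ => S γ ^ 2) (𝓝[>] (0:ℝ)) atTop :=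
    tendsto_atTop_mono' _ (hγ_mem.mono hbound) hlog
  refine ⟨?_, hsq⟩
  exact (tendsto_sqrt_atTop.comp hsq).congr' (hγ_mem.mono fun γ hγ => sqrt_sq (hS γ hγ).1.le)
end
end
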